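/- arXiv:2008.03891 — 4 statements merged into one kernel-verified Lean document; each statement's English description precedes it below -/
import Mathlib

section
/- (Hoeffding's inequality for bounded i.i.d. samples) Let X₁,…,X_m be i.i.d. random variables with a ≤ X_i ≤ b almost surely and mean μ. Then for any ε > 0, P( (1/m)Σ X_i − μ ≥ ε ) ≤ exp(−2mε²/(b−a)²). -/
open MeasureTheory ProbabilityTheory Real

/-! Centred bounded variables are sub-Gaussian with parameter `((b - a) / 2) ^ 2` (Hoeffding's
lemma), parameters of independent sub-Gaussian variables add up, and the Chernoff bound for the
sum, evaluated at the optimal exponent, is the claimed tail bound. -/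

lemma measureReal_sum_sub_integral_ge_le {Ω ι : Type*} [MeasurableSpace Ω] {P : Measure Ω}
    [IsProbabilityMeasure P] {X : ι → Ω → ℝ} (hmeas : ∀ i, AEMeasurable (X i) P)
    (hindep : iIndepFun X P) {a b : ℝ} (hbound : ∀ i, ∀ᵐ ω ∂P, X i ω ∈ Set.Icc a b)
    (s : Finset ι) {ε : ℝ} (hε : 0 ≤ ε) :
    P.real {ω | ε ≤ ∑ i ∈ s, (X i ω - P[X i])}
      ≤ exp (-2 * ε ^ 2 / (s.card * (b - a) ^ 2)) := by
  have hcentred : iIndepFun (fun i ω ↦ X i ω - P[X i]) P :=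
    hindep.comp (fun i x ↦ x - ∫ ω, X i ω ∂P) (fun _ ↦ measurable_id.sub_const _)
  have hsubG := HasSubgaussianMGF.measure_sum_ge_le_of_iIndepFun hcentred
    (fun i _ ↦ hasSubgaussianMGF_of_mem_Icc (hmeas i) (hbound i)) (s := s) hε
  have hparam :
      2 * ((∑ _i ∈ s, (‖b - a‖₊ / 2) ^ 2 : NNReal) : ℝ) = s.card * (b - a) ^ 2 / 2 := by
    simp only [Finset.sum_const, nsmul_eq_mul, NNReal.coe_mul, NNReal.coe_natCast,
      NNReal.coe_pow, NNReal.coe_div, coe_nnnorm, Real.norm_eq_abs, NNReal.coe_ofNat, div_pow,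
      sq_abs]
    ring
  convert hsubG using 2
  rw [hparam, div_div_eq_mul_div]
  ring

theorem hoeffding_inequality_iid_general
    {Ω : Type*} [MeasureSpace Ω] [IsProbabilityMeasure (volume : Measure Ω)]
    (m : ℕ) (hm : 1 ≤ m) (X : Fin m → Ω → ℝ) (hmeas : ∀ i, Measurable (X i))
    (hindep : iIndepFun X (volume : Measure Ω))
    (a b μ : ℝ)
    (hbound : ∀ i, ∀ᵐ ω ∂(volume : Measure Ω), X i ω ∈ Set.Icc a b)
    (hmean : ∀ i, ∫ ω, X i ω ∂(volume : Measure Ω) = μ)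
    (ε : ℝ) (hε : 0 < ε) :
    ((volume : Measure Ω) {ω | ε ≤ (∑ i, X i ω) / m - μ}).toReal
      ≤ Real.exp (-2 * m * ε ^ 2 / (b - a) ^ 2) := by
  have hm0 : (0 : ℝ) < m := by exact_mod_cast hm
  have hevent : {ω | ε ≤ (∑ i, X i ω) / m - μ}
      = {ω | m * ε ≤ ∑ i, (X i ω - ∫ ω, X i ω)} := by
    ext ω
    simp only [hmean, Set.mem_ofPred_eq, Finset.sum_sub_distrib, Finset.sum_const,
      Finset.card_univ, Fintype.card_fin, nsmul_eq_mul, le_sub_iff_add_le, le_div_iff₀ hm0]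
    constructor <;> intro h <;> linarith
  calc ((volume : Measure Ω) {ω | ε ≤ (∑ i, X i ω) / m - μ}).toReal
      ≤ exp (-2 * (m * ε) ^ 2 / (m * (b - a) ^ 2)) := by
        rw [hevent, ← measureReal_def]
        simpa only [Finset.card_univ, Fintype.card_fin] using
          measureReal_sum_sub_integral_ge_le (fun i ↦ (hmeas i).aemeasurable) hindep hbound
            Finset.univ (ε := m * ε) (by positivity)
    _ = exp (-2 * m * ε ^ 2 / (b - a) ^ 2) := by
        congr 1
        field_simp

/-- Hoeffding's inequality for bounded i.i.d. samples: if `X₁, …, X_m` are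
i.i.d., bounded in `[a,b]` almost surely, with common mean `μ`, then for any
`ε > 0`, `P((1/m) Σ Xᵢ - μ ≥ ε) ≤ exp (-2 m ε² / (b-a)²)`. -/
theorem hoeffding_inequality_iid
    {Ω : Type*} [MeasureSpace Ω] [IsProbabilityMeasure (volume : Measure Ω)]
    (m : ℕ) (hm : 1 ≤ m) (X : Fin m → Ω → ℝ) (hmeas : ∀ i, Measurable (X i))
    (hindep : iIndepFun X (volume : Measure Ω))
    (hident : ∀ i j, Measure.map (X i) (volume : Measure Ω)
        = Measure.map (X j) (volume : Measure Ω))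
    (a b μ : ℝ) (hab : a < b)
    (hbound : ∀ i, ∀ᵐ ω ∂(volume : Measure Ω), X i ω ∈ Set.Icc a b)
    (hmean : ∀ i, ∫ ω, X i ω ∂(volume : Measure Ω) = μ)
    (ε : ℝ) (hε : 0 < ε) :
    ((volume : Measure Ω) {ω | ε ≤ (∑ i, X i ω) / m - μ}).toReal
      ≤ Real.exp (-2 * m * ε ^ 2 / (b - a) ^ 2) :=
  hoeffding_inequality_iid_general m hm X hmeas hindep a b μ hbound hmean ε hε
end

section
/- (Correctness of range trimming for the lower bound) Let D be a finite set of distinct reals, S a uniform random m-subset (m ≥ 2), and suppose Lbound is a procedure such that for every finite population P of reals and every sample size k, the probability over uniform k-subsets T of P that Lbound(T) > AVG(P) is less than δ. Then the probability that Lbound(S \ {max S}) > AVG(D) is less than δ, where Lbound is applied treating S \ {max S} as a sample from {d ∈ D : d < max S}. -/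
/-!
Split the m-subsets S of D according to their maximum x: S ↦ (x, S \ {x}) is a bijection onto
the pairs (x, T) with x ∈ D and T an (m-1)-subset of D_{<x} = {d ∈ D | d < x}, so the uniform
sample S \ {max S} is, given max S = x, a uniform sample from D_{<x}. Since every element of
D_{<x} lies below every element of D \ D_{<x}, AVG(D_{<x}) ≤ AVG(D); hence exceeding AVG(D) is
rarer than exceeding AVG(D_{<x}), and the guarantee for the population D_{<x} bounds the failures
with maximum x by δ times the number of subsets with maximum x. Summing over x gives the claim,
strictly because the term x = max D is nonempty (m ≤ |D|).
-/

open Finset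

section MaxDecomposition

variable {α : Type*} [LinearOrder α]

theorem le_of_mem_insert_of_forall_lt [DecidableEq α] {x z : α} {T : Finset α}
    (hT : ∀ y ∈ T, y < x) (hz : z ∈ insert x T) : z ≤ x := by
  rcases mem_insert.1 hz with rfl | hz
  exacts [le_rfl, (hT z hz).le]

theorem card_powersetCard_succ_filter_exists_max [DecidableEq α] (D : Finset α) (m : ℕ)
    (q : Finset α → Prop) [DecidablePred q]
    [DecidablePred fun S : Finset α => ∃ x ∈ S, (∀ y ∈ S, y ≤ x) ∧ q (S.erase x)] :
    #{S ∈ D.powersetCard (m + 1) | ∃ x ∈ S, (∀ y ∈ S, y ≤ x) ∧ q (S.erase x)}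
      = ∑ x ∈ D, #{T ∈ {y ∈ D | y < x}.powersetCard m | q T} := by
  rw [← card_sigma]
  symm
  refine card_nbij (fun p => insert p.1 p.2) ?_ ?_ ?_
  · rintro ⟨x, T⟩ h
    simp only [coe_sigma, Set.mem_sigma_iff, mem_coe, mem_filter, mem_powersetCard,
      subset_iff] at h ⊢
    obtain ⟨hxD, ⟨hTD, rfl⟩, hq⟩ := h
    have hxT : x ∉ T := fun hx => (hTD hx).2.false
    refine ⟨⟨?_, card_insert_of_notMem hxT⟩, x, mem_insert_self x T,
      fun y => le_of_mem_insert_of_forall_lt fun z hz => (hTD hz).2, by rwa [erase_insert hxT]⟩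
    simpa [forall_and, hxD] using fun y hy => (hTD hy).1
  · rintro ⟨x, T⟩ h ⟨x', T'⟩ h' (heq : insert x T = insert x' T')
    simp only [coe_sigma, Set.mem_sigma_iff, mem_coe, mem_filter, mem_powersetCard,
      subset_iff] at h h'
    have hT : ∀ y ∈ T, y < x := fun y hy => (h.2.1.1 hy).2
    have hT' : ∀ y ∈ T', y < x' := fun y hy => (h'.2.1.1 hy).2
    obtain rfl : x = x' := le_antisymm
      (le_of_mem_insert_of_forall_lt hT' (heq ▸ mem_insert_self x T))
      (le_of_mem_insert_of_forall_lt hT (heq ▸ mem_insert_self x' T'))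
    have hxT : x ∉ T := fun hx => (hT x hx).false
    have hxT' : x ∉ T' := fun hx => (hT' x hx).false
    rw [← erase_insert hxT, heq, erase_insert hxT']
  · rintro S h
    simp only [mem_coe, mem_filter, mem_powersetCard] at h
    obtain ⟨⟨hSD, hSm⟩, x, hxS, hmax, hq⟩ := h
    refine ⟨⟨x, S.erase x⟩, ?_, insert_erase hxS⟩
    simp only [coe_sigma, Set.mem_sigma_iff, mem_coe, mem_filter, mem_powersetCard, subset_iff,
      mem_erase]
    refine ⟨hSD hxS, ⟨fun y hy => ⟨hSD hy.2, (hmax y hy.2).lt_of_ne hy.1⟩, ?_⟩, hq⟩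
    rw [card_erase_of_mem hxS, hSm, Nat.add_sub_cancel]

theorem card_powersetCard_succ_eq_sum (D : Finset α) (m : ℕ) :
    #(D.powersetCard (m + 1)) = ∑ x ∈ D, #({y ∈ D | y < x}.powersetCard m) := by
  have h := card_powersetCard_succ_filter_exists_max D m fun _ => True
  simp only [and_true, filter_true] at h
  rw [← h, filter_true_of_mem]
  intro S hS
  have hS : S.Nonempty := card_pos.1 ((mem_powersetCard.1 hS).2 ▸ m.succ_pos)
  exact ⟨S.max' hS, S.max'_mem hS, S.le_max'⟩

theorem filter_lt_max'_eq_erase [DecidableEq α] (D : Finset α) (hD : D.Nonempty) :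
    {y ∈ D | y < D.max' hD} = D.erase (D.max' hD) := by
  ext y
  simp only [mem_filter, mem_erase, lt_iff_le_and_ne]
  exact ⟨fun h => ⟨h.2.2, h.1⟩, fun h => ⟨h.2, D.le_max' y h.2, h.1⟩⟩

end MaxDecomposition

section Mean

variable {K : Type*} [Field K] [LinearOrder K] [IsStrictOrderedRing K]

theorem sum_mul_card_le_sum_mul_card_of_forall_le {P Q : Finset K}
    (h : ∀ a ∈ P, ∀ b ∈ Q, a ≤ b) : P.sum id * #Q ≤ Q.sum id * #P :=
  calc P.sum id * #Q = ∑ a ∈ P, ∑ _b ∈ Q, a := by rw [sum_mul]; simp [mul_comm]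
    _ ≤ ∑ _a ∈ P, ∑ b ∈ Q, b := sum_le_sum fun a ha => sum_le_sum fun b hb => h a ha b hb
    _ = Q.sum id * #P := by simp [sum_const, mul_comm]

theorem mean_filter_lt_le_mean (D : Finset K) (x : K) (h : {y ∈ D | y < x}.Nonempty) :
    {y ∈ D | y < x}.sum id / #{y ∈ D | y < x} ≤ D.sum id / #D := by
  set P := {y ∈ D | y < x}
  set Q := {y ∈ D | ¬y < x}
  have hPQ : P.sum id * #Q ≤ Q.sum id * #P :=
    sum_mul_card_le_sum_mul_card_of_forall_le fun a ha b hb =>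
      ((mem_filter.1 ha).2.trans_le (not_lt.1 (mem_filter.1 hb).2)).le
  have hP : (0 : K) < #P := by exact_mod_cast h.card_pos
  have hD : (0 : K) < #D := by exact_mod_cast (h.mono (filter_subset _ D)).card_pos
  rw [div_le_div_iff₀ hP hD, ← sum_filter_add_sum_filter_not D (· < x),
    ← card_filter_add_card_filter_not (· < x)]
  push_cast
  linarith

end Mean

theorem range_trim_lower_bound_correct_general
    (Lbound : Finset ℝ → ℝ) (δ : ℝ)
    (hguarantee : ∀ (P : Finset ℝ) (k : ℕ), P.Nonempty → k ≤ P.card →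
      (((P.powersetCard k).filter
            (fun T => P.sum id / (P.card : ℝ) < Lbound T)).card : ℝ)
        < δ * ((P.powersetCard k).card : ℝ))
    (D : Finset ℝ) (m : ℕ) (hm : 2 ≤ m) (hmD : m ≤ D.card) :
    (((D.powersetCard m).filter
          (fun S => ∃ x ∈ S, (∀ y ∈ S, y ≤ x) ∧
            D.sum id / (D.card : ℝ) < Lbound (S.erase x))).card : ℝ)
      < δ * ((D.powersetCard m).card : ℝ) := by
  obtain ⟨k, rfl⟩ : ∃ k, m = k + 1 + 1 := ⟨m - 2, by omega⟩
  have hD : D.Nonempty := card_pos.1 (by omega)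
  have hbad : ∀ x, k + 1 ≤ #{y ∈ D | y < x} →
      (#{T ∈ {y ∈ D | y < x}.powersetCard (k + 1) | D.sum id / #D < Lbound T} : ℝ)
        < δ * #({y ∈ D | y < x}.powersetCard (k + 1)) := by
    intro x hk
    set L := {y ∈ D | y < x}
    have hL : L.Nonempty := card_pos.1 (by omega)
    calc (#{T ∈ L.powersetCard (k + 1) | D.sum id / #D < Lbound T} : ℝ)
        ≤ #{T ∈ L.powersetCard (k + 1) | L.sum id / #L < Lbound T} := by
          have := mean_filter_lt_le_mean D x hL
          gcongr
      _ < δ * #(L.powersetCard (k + 1)) := hguarantee L (k + 1) hL hk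
  rw [card_powersetCard_succ_filter_exists_max D (k + 1) fun T => D.sum id / #D < Lbound T,
    card_powersetCard_succ_eq_sum]
  push_cast [mul_sum]
  refine sum_lt_sum (fun x _ => ?_) ⟨D.max' hD, D.max'_mem hD, hbad _ ?_⟩
  · by_cases hk : k + 1 ≤ #{y ∈ D | y < x}
    · exact (hbad x hk).le
    · simp [powersetCard_eq_empty.2 (not_le.1 hk)]
  · rw [filter_lt_max'_eq_erase, card_erase_of_mem (D.max'_mem hD)]
    omega

/-- Correctness of range trimming for the lower bound: if `Lbound` is a
procedure which, for every finite population `P` of reals and sample size `k`,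
fails (returns a value exceeding `AVG(P)`) on fewer than a `δ` fraction of the
uniform `k`-subsets of `P`, then applying `Lbound` to `S \ {max S}` (treated
as a sample from `{d ∈ D : d < max S}`) for a uniformly random `m`-subset `S`
of `D` exceeds `AVG(D)` with probability less than `δ`. -/
theorem range_trim_lower_bound_correct
    (Lbound : Finset ℝ → ℝ) (δ : ℝ) (hδ : 0 < δ)
    (hguarantee : ∀ (P : Finset ℝ) (k : ℕ), P.Nonempty → k ≤ P.card →
      (((P.powersetCard k).filter
            (fun T => P.sum id / (P.card : ℝ) < Lbound T)).card : ℝ)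
        < δ * ((P.powersetCard k).card : ℝ))
    (D : Finset ℝ) (m : ℕ) (hm : 2 ≤ m) (hmD : m ≤ D.card) :
    (((D.powersetCard m).filter
          (fun S => ∃ x ∈ S, (∀ y ∈ S, y ≤ x) ∧
            D.sum id / (D.card : ℝ) < Lbound (S.erase x))).card : ℝ)
      < δ * ((D.powersetCard m).card : ℝ) :=
  range_trim_lower_bound_correct_general Lbound δ hguarantee D m hm hmD
end

section
/- (Serfling's martingale property) Let D = {x₁,…,x_N} with mean μ, and X₁,…,X_N a uniformly random without-replacement ordering of D. Define Z_k = (Σ_{t=1}^k (X_t − μ))/(N − k) for 0 ≤ k ≤ N−1. Then (Z_k) is a martingale with respect to the natural filtration of (X_t). -/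
/-!
Conditionally on the first `i` draws, the remaining draws are exchangeable: right multiplication
by the transposition of two later positions permutes the orderings with a given prefix. So every
later draw has conditional mean equal to the mean of the values not yet drawn, namely
`-S_i / (N - i)` with `S_i = ∑_{t < i} (X_t - μ)`, whence `E[S_j | prefix] = S_i (N - j) / (N - i)`.
As `ℱ_i` is coarser than the σ-algebra of the first `i` positions of the permutation, the
defining identity of the conditional expectation can be checked on each set of orderings with a
given prefix.
-/

open MeasureTheory

instance permMeasurableSpace (N : ℕ) : MeasurableSpace (Equiv.Perm (Fin N)) := ⊤

open Finset

namespace Equiv.Perm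

variable {α : Type*} [Fintype α] [DecidableEq α]

def agreeingOn (P : Finset α) (σ₀ : Perm α) : Finset (Perm α) := {σ | ∀ t ∈ P, σ t = σ₀ t}

variable {P : Finset α} {σ₀ σ : Perm α}

theorem mem_agreeingOn : σ ∈ agreeingOn P σ₀ ↔ ∀ t ∈ P, σ t = σ₀ t := by
  simp [agreeingOn]

theorem filter_restrict_eq_eq_agreeingOn (P : Finset α) (σ₀ : Perm α) :
    ({σ | (fun t : P => σ t) = fun t : P => σ₀ t} : Finset (Perm α)) = agreeingOn P σ₀ := by
  ext σ
  simp [mem_agreeingOn, funext_iff]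

theorem sum_agreeingOn_apply_eq {M : Type*} [AddCommMonoid M] (g : α → M) {a b : α}
    (ha : a ∉ P) (hb : b ∉ P) :
    ∑ σ ∈ agreeingOn P σ₀, g (σ a) = ∑ σ ∈ agreeingOn P σ₀, g (σ b) := by
  refine sum_equiv (Equiv.mulRight (swap a b)) (fun σ => ?_) (fun σ _ => by simp)
  have hfix : ∀ t ∈ P, swap a b t = t := fun t ht =>
    swap_apply_of_ne_of_ne (ne_of_mem_of_not_mem ht ha) (ne_of_mem_of_not_mem ht hb)
  simp +contextual [mem_agreeingOn, hfix]

theorem sum_compl_apply_of_mem_agreeingOn {M : Type*} [AddCommGroup M] (g : α → M)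
    (hσ : σ ∈ agreeingOn P σ₀) : ∑ t ∈ Pᶜ, g (σ t) = ∑ t ∈ Pᶜ, g (σ₀ t) := by
  have hP : ∑ t ∈ P, g (σ t) = ∑ t ∈ P, g (σ₀ t) :=
    sum_congr rfl fun t ht => by rw [mem_agreeingOn.1 hσ t ht]
  have htot : ∑ t, g (σ t) = ∑ t, g (σ₀ t) := by
    rw [Equiv.sum_comp σ g, Equiv.sum_comp σ₀ g]
  rw [← sum_compl_add_sum P, ← sum_compl_add_sum P, hP] at htot
  exact add_right_cancel htot

theorem card_compl_smul_sum_agreeingOn_apply {M : Type*} [AddCommGroup M] (g : α → M) {a : α}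
    (ha : a ∉ P) :
    #Pᶜ • ∑ σ ∈ agreeingOn P σ₀, g (σ a) = #(agreeingOn P σ₀) • ∑ t ∈ Pᶜ, g (σ₀ t) := by
  calc #Pᶜ • ∑ σ ∈ agreeingOn P σ₀, g (σ a)
      = ∑ t ∈ Pᶜ, ∑ σ ∈ agreeingOn P σ₀, g (σ t) := by
        rw [← sum_const]
        exact sum_congr rfl fun t ht => sum_agreeingOn_apply_eq g ha (mem_compl.1 ht)
    _ = ∑ σ ∈ agreeingOn P σ₀, ∑ t ∈ Pᶜ, g (σ₀ t) := by
        rw [sum_comm]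
        exact sum_congr rfl fun σ hσ => sum_compl_apply_of_mem_agreeingOn g hσ
    _ = #(agreeingOn P σ₀) • ∑ t ∈ Pᶜ, g (σ₀ t) := sum_const _

end Equiv.Perm

theorem Finset.sum_sub_average_eq_zero {ι K : Type*} [Fintype ι] [Field K] [CharZero K]
    (x : ι → K) : ∑ t, (x t - (∑ i, x i) / Fintype.card ι) = 0 := by
  rcases isEmpty_or_nonempty ι with hι | hι
  · exact sum_of_isEmpty _
  · rw [sum_sub_distrib, sum_const, card_univ, nsmul_eq_mul,
      mul_div_cancel₀ _ (Nat.cast_ne_zero.2 Fintype.card_ne_zero), sub_self]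

section Uniform

variable {Ω β : Type*} [Fintype Ω] [Nonempty Ω]

theorem setIntegral_uniformOfFintype [MeasurableSpace Ω] [MeasurableSingletonClass Ω]
    (s : Set Ω) (f : Ω → ℝ) :
    ∫ ω in s, f ω ∂(PMF.uniformOfFintype Ω).toMeasure
      = (Fintype.card Ω : ℝ)⁻¹ * ∑ ω, s.indicator f ω := by
  rw [← integral_indicator s.toFinite.measurableSet, PMF.integral_eq_sum, mul_sum]
  simp [PMF.uniformOfFintype_apply]

theorem ae_eq_condExp_uniformOfFintype_of_sum_fiber_eq [DecidableEq β] {m mΩ : MeasurableSpace Ω}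
    [MeasurableSingletonClass Ω] (hm : m ≤ mΩ) {φ : Ω → β} (hφ : m ≤ MeasurableSpace.comap φ ⊤)
    {f g : Ω → ℝ} (hg : StronglyMeasurable[m] g)
    (hfg : ∀ ω₀, ∑ ω with φ ω = φ ω₀, f ω = ∑ ω with φ ω = φ ω₀, g ω) :
    g =ᵐ[(PMF.uniformOfFintype Ω).toMeasure] (PMF.uniformOfFintype Ω).toMeasure[f|m] := by
  have : IsFiniteMeasure ((PMF.uniformOfFintype Ω).toMeasure.trim hm) := isFiniteMeasure_trim _
  have hint : ∀ F : Ω → ℝ, Integrable F (PMF.uniformOfFintype Ω).toMeasure :=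
    fun _ => .of_finite
  refine ae_eq_condExp_of_forall_setIntegral_eq hm (hint f)
    (fun _ _ _ => (hint g).integrableOn) (fun s hs _ => ?_) hg.aestronglyMeasurable
  obtain ⟨A, -, rfl⟩ := hφ s hs
  have hfiber : ∀ F : Ω → ℝ, ∑ ω, (φ ⁻¹' A).indicator F ω
      = ∑ b ∈ univ.image φ, A.indicator (fun b => ∑ ω with φ ω = b, F ω) b := by
    intro F
    rw [← sum_fiberwise_of_maps_to (fun ω _ => mem_image_of_mem φ (mem_univ ω))]
    refine sum_congr rfl fun b _ => ?_
    by_cases hb : b ∈ A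
    · rw [Set.indicator_of_mem hb]
      exact sum_congr rfl fun ω hω => by rw [Set.indicator_of_mem (by simp_all)]
    · rw [Set.indicator_of_notMem hb]
      exact sum_eq_zero fun ω hω => by rw [Set.indicator_of_notMem (by simp_all)]
  rw [setIntegral_uniformOfFintype, setIntegral_uniformOfFintype, hfiber, hfiber]
  congr 1
  refine sum_congr rfl fun b hb => ?_
  obtain ⟨ω₀, -, rfl⟩ := mem_image.1 hb
  classical
  rw [Set.indicator_apply, Set.indicator_apply, hfg ω₀]

end Uniform

section FactorsThrough

variable {Ω β γ : Type*}

theorem MeasurableSpace.comap_le_comap_top_of_factorsThrough [MeasurableSpace γ] [Nonempty γ]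
    {φ : Ω → β} {f : Ω → γ} (hf : f.FactorsThrough φ) :
    MeasurableSpace.comap f ‹_› ≤ MeasurableSpace.comap φ ⊤ := by
  obtain ⟨e, rfl⟩ := (Function.factorsThrough_iff f).1 hf
  rw [← MeasurableSpace.comap_comp]
  exact MeasurableSpace.comap_mono le_top

theorem MeasureTheory.Filtration.natural_le_comap_top_of_factorsThrough {ι : Type*} [Preorder ι]
    [MeasurableSpace Ω] [TopologicalSpace γ] [TopologicalSpace.MetrizableSpace γ]
    [MeasurableSpace γ] [BorelSpace γ] [Nonempty γ] {u : ι → Ω → γ}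
    (hu : ∀ i, StronglyMeasurable (u i)) {φ : Ω → β} {i : ι}
    (hφ : ∀ j ≤ i, (u j).FactorsThrough φ) :
    Filtration.natural u hu i ≤ MeasurableSpace.comap φ ⊤ :=
  iSup₂_le fun j hj => MeasurableSpace.comap_le_comap_top_of_factorsThrough (hφ j hj)

end FactorsThrough

section Serfling

open Equiv.Perm

variable {N : ℕ}

-- With `g = x - μ` this is Serfling's `Z_k`: position `t` of `σ` is the draw `X_{t+1}`.
noncomputable def serflingProcess (g : Fin N → ℝ) (k : Fin N) (σ : Equiv.Perm (Fin N)) : ℝ :=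
  (∑ t ∈ Iio k, g (σ t)) / ((N : ℝ) - k)

theorem sub_mul_sum_agreeingOn_Iio_sum_Iio {g : Fin N → ℝ} (hg : ∑ t, g t = 0) {i j : Fin N}
    (hij : i ≤ j) (σ₀ : Equiv.Perm (Fin N)) :
    ((N : ℝ) - i) * ∑ σ ∈ agreeingOn (Iio i) σ₀, ∑ t ∈ Iio j, g (σ t)
      = ((N : ℝ) - j) * (#(agreeingOn (Iio i) σ₀) * ∑ t ∈ Iio i, g (σ₀ t)) := by
  set F := agreeingOn (Iio i) σ₀
  set S := ∑ t ∈ Iio i, g (σ₀ t)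
  have hrest : ∑ t ∈ (Iio i)ᶜ, g (σ₀ t) = -S := by
    have htot : ∑ t, g (σ₀ t) = 0 := by rw [Equiv.sum_comp σ₀ g, hg]
    rw [← sum_compl_add_sum (Iio i)] at htot
    linarith
  have hcard : (#(Iio i)ᶜ : ℝ) = N - i := by
    rw [card_compl, Fin.card_Iio, Fintype.card_fin, Nat.cast_sub i.isLt.le]
  have hearly : ∀ t ∈ Iio i, ∑ σ ∈ F, g (σ t) = #F * g (σ₀ t) := fun t ht => by
    rw [← nsmul_eq_mul, ← sum_const]
    exact sum_congr rfl fun σ hσ => by rw [mem_agreeingOn.1 hσ t ht]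
  have hlate : ∀ t ∈ Ico i j, ((N : ℝ) - i) * ∑ σ ∈ F, g (σ t) = -(#F * S) := fun t ht => by
    have := card_compl_smul_sum_agreeingOn_apply (P := Iio i) (σ₀ := σ₀) (a := t) g
      (by simp [(mem_Ico.1 ht).1])
    rw [nsmul_eq_mul, nsmul_eq_mul, hcard, hrest] at this
    linarith
  have hsplit : Iio i ∪ Ico i j = Iio j :=
    coe_injective (by push_cast; exact Set.Iio_union_Ico_eq_Iio hij)
  have hdisj : Disjoint (Iio i) (Ico i j) := disjoint_coe.1 (by
    push_cast
    exact (Set.Iio_disjoint_Ici le_rfl).mono_right Set.Ico_subset_Ici_self)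
  calc ((N : ℝ) - i) * ∑ σ ∈ F, ∑ t ∈ Iio j, g (σ t)
      = ((N : ℝ) - i) * ∑ t ∈ Iio i, ∑ σ ∈ F, g (σ t)
          + ∑ t ∈ Ico i j, ((N : ℝ) - i) * ∑ σ ∈ F, g (σ t) := by
        rw [sum_comm, ← hsplit, sum_union hdisj, mul_add, mul_sum (Ico i j)]
    _ = ((N : ℝ) - i) * (#F * S) + ((j : ℝ) - i) * -(#F * S) := by
        rw [sum_congr rfl hearly, sum_congr rfl hlate, sum_const, nsmul_eq_mul, ← mul_sum,
          Fin.card_Ico, Nat.cast_sub hij]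
    _ = ((N : ℝ) - j) * (#F * S) := by ring

theorem sum_agreeingOn_serflingProcess {g : Fin N → ℝ} (hg : ∑ t, g t = 0) {i j : Fin N}
    (hij : i ≤ j) (σ₀ : Equiv.Perm (Fin N)) :
    ∑ σ ∈ agreeingOn (Iio i) σ₀, serflingProcess g j σ
      = ∑ σ ∈ agreeingOn (Iio i) σ₀, serflingProcess g i σ := by
  have hpos : ∀ k : Fin N, (N : ℝ) - k ≠ 0 := fun k =>
    sub_ne_zero.2 (by exact_mod_cast k.isLt.ne')
  have hfixed : ∀ σ ∈ agreeingOn (Iio i) σ₀, serflingProcess g i σ = serflingProcess g i σ₀ :=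
    fun σ hσ => by
      unfold serflingProcess
      rw [sum_congr rfl fun t ht => by rw [mem_agreeingOn.1 hσ t ht]]
  rw [sum_congr rfl hfixed, sum_const, nsmul_eq_mul]
  unfold serflingProcess
  rw [← sum_div, mul_div_assoc', div_eq_div_iff (hpos j) (hpos i), mul_comm,
    sub_mul_sum_agreeingOn_Iio_sum_Iio hg hij σ₀]
  ring

theorem stronglyAdapted_serflingProcess {x : Fin N → ℝ} {u : Fin N → Equiv.Perm (Fin N) → ℝ}
    (hu : ∀ i, StronglyMeasurable (u i))
    (hu_succ : ∀ (t : Fin N) (ht : (t : ℕ) + 1 < N), u ⟨t + 1, ht⟩ = fun σ => x (σ t)) (c : ℝ) :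
    StronglyAdapted (Filtration.natural u hu) (serflingProcess fun a => x a - c) := by
  intro k
  refine Measurable.stronglyMeasurable ((Finset.measurable_sum _ fun t ht => ?_).div_const _)
  have htk : (t : ℕ) + 1 ≤ k := mem_Iio.1 ht
  have hu_t := ((Filtration.stronglyAdapted_natural hu ⟨t + 1, htk.trans_lt k.isLt⟩).mono
    (Filtration.mono _ htk)).measurable
  rw [hu_succ] at hu_t
  exact hu_t.sub_const c

end Serfling

instance permMeasurableSingletonClass (N : ℕ) : MeasurableSingletonClass (Equiv.Perm (Fin N)) :=
  ⟨fun _ => MeasurableSpace.measurableSet_top⟩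

/-- Serfling's martingale property: let `X₁, …, X_N` be a uniformly random
without-replacement ordering of a population of `N` reals with mean `μ`
(modeled by a uniformly random permutation `σ`, with `X_t σ = x (σ (t-1))`),
and let `Z_k = (Σ_{t=1}^k (X_t - μ)) / (N - k)`.  Then `(Z_k)_{0 ≤ k ≤ N-1}`
is a martingale with respect to the natural filtration of `(X_t)`
(where `ℱ_k = σ(X₁, …, X_k)` and `ℱ_0` is trivial). -/
theorem serfling_martingale
    (N : ℕ) (x : Fin N → ℝ) (μ : ℝ) (hμ : μ = (∑ i, x i) / N)
    (u : Fin N → Equiv.Perm (Fin N) → ℝ)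
    (hu_def : ∀ (k : Fin N) (σ : Equiv.Perm (Fin N)),
      u k σ = if hk : (k : ℕ) = 0 then 0
              else x (σ ⟨(k : ℕ) - 1, lt_of_le_of_lt (Nat.pred_le _) k.isLt⟩))
    (hu : ∀ i, StronglyMeasurable (u i))
    (Z : Fin N → Equiv.Perm (Fin N) → ℝ)
    (hZ : ∀ (k : Fin N) (σ : Equiv.Perm (Fin N)),
      Z k σ = (∑ t : Fin N, if (t : ℕ) < (k : ℕ) then x (σ t) - μ else 0)
                / ((N : ℝ) - (k : ℕ))) :
    Martingale Z (Filtration.natural u hu)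
      ((PMF.uniformOfFintype (Equiv.Perm (Fin N))).toMeasure) := by
  have hg : ∑ t, (x t - μ) = 0 := by
    simpa [hμ] using sum_sub_average_eq_zero x
  have hZg : Z = serflingProcess (fun a => x a - μ) := by
    funext k σ
    rw [hZ, serflingProcess, ← sum_filter]
    congr 2
    ext t
    simp
  have hu_succ : ∀ (t : Fin N) (ht : (t : ℕ) + 1 < N), u ⟨t + 1, ht⟩ = fun σ => x (σ t) :=
    fun t ht => funext fun σ => by rw [hu_def, dif_neg t.val.succ_ne_zero]; rfl
  have hadapted : StronglyAdapted (Filtration.natural u hu) Z :=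
    hZg ▸ stronglyAdapted_serflingProcess hu hu_succ μ
  refine ⟨hadapted, fun i j hij => ?_⟩
  have hprefix : ∀ m ≤ i, (u m).FactorsThrough fun σ (t : Iio i) => σ t := by
    intro m hm σ σ' h
    rw [hu_def, hu_def]
    split_ifs
    · rfl
    · exact congrArg x (congrFun h ⟨_, mem_Iio.2 (by simp [Fin.lt_def]; omega)⟩)
  refine (ae_eq_condExp_uniformOfFintype_of_sum_fiber_eq (Filtration.le _ i)
    (Filtration.natural_le_comap_top_of_factorsThrough hu hprefix) (hadapted i)
    fun σ₀ => ?_).symm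
  rw [Equiv.Perm.filter_restrict_eq_eq_agreeingOn, hZg]
  exact sum_agreeingOn_serflingProcess hg hij σ₀
end

section
/- (Hoeffding–Serfling maximal inequality) Let D = {x₁,…,x_N} ⊆ [a,b] with mean μ, and X₁,…,X_N a uniformly random without-replacement ordering. For every 1 ≤ m ≤ N−1 and ε > 0, P( max_{1≤k≤m} (Σ_{t=1}^k (X_t − μ))/(N−k) ≥ mε/(N−m) ) ≤ exp( −2mε² / ((1−(m−1)/N)(b−a)²) ). -/
/-!
Put `y = x - μ`, so that `∑ y = 0`, and let `S_k` be the sum of the first `k` draws. Then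
`M_k = S_k / (N - k)` is minus the mean of the values not yet drawn, hence a martingale along
the draws. Conditioning on the first `i` draws is realised by averaging over `σ * swap i j`,
`j ≥ i`: this keeps the first `i` draws and makes `σ j` the next one. By Jensen, `exp (s M_k)`
is then a submartingale for `s ≥ 0`, and Doob's maximal inequality bounds the probability that
some `M_k`, `k ≤ m`, reaches `c` by `exp (-s c) E[exp (s M_m)]`. Hoeffding's lemma, applied to
each conditional step (after scaling, a draw from an interval of length `(b - a) / (N - k - 1)`),
gives `E[exp (s M_m)] ≤ exp (s² (b - a)² V / 8)` with `V = ∑_{k < m} (N - k - 1)⁻²`, and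
comparison with a telescoping sum gives `V ≤ m (N - m + 1) / (N (N - m)²)`. Optimising over `s`
yields the bound.
-/

open scoped Classical

open Finset Real MeasureTheory ProbabilityTheory Equiv

section FiniteAverage

variable {ι : Type*} (A : Finset ι) (v : ι → ℝ)

theorem card_mul_exp_mul_average_le_sum_exp (t : ℝ) :
    #A * exp (t * ((∑ i ∈ A, v i) / #A)) ≤ ∑ i ∈ A, exp (t * v i) := by
  rcases A.eq_empty_or_nonempty with rfl | hA
  · simp
  have hcard : (0 : ℝ) < #A := by exact_mod_cast hA.card_pos
  have jensen := convexOn_exp.map_sum_le (t := A) (w := fun _ => (#A : ℝ)⁻¹)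
    (p := fun i => t * v i) (fun _ _ => by positivity)
    (by simp [hcard.ne']) (fun _ _ => Set.mem_univ _)
  simp only [smul_eq_mul, ← Finset.mul_sum] at jensen
  rw [← le_inv_mul_iff₀ hcard]
  convert jensen using 2
  field_simp

theorem sum_exp_mul_le_card_mul_exp {a b : ℝ} (hv : ∀ i ∈ A, v i ∈ Set.Icc a b) (t : ℝ) :
    ∑ i ∈ A, exp (t * v i)
      ≤ #A * exp (t * ((∑ i ∈ A, v i) / #A) + t ^ 2 * (b - a) ^ 2 / 8) := by
  rcases A.eq_empty_or_nonempty with rfl | hA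
  · simp
  have : Nonempty A := hA.to_subtype
  let _ : MeasurableSpace A := ⊤
  set P := (PMF.uniformOfFintype A).toMeasure
  have integral_eq (f : ι → ℝ) : ∫ i, f i ∂P = (∑ i ∈ A, f i) / #A := by
    rw [PMF.integral_eq_sum, ← Finset.sum_coe_sort A, Finset.sum_div]
    simp [PMF.uniformOfFintype_apply, div_eq_inv_mul]
  set avg := (∑ i ∈ A, v i) / #A
  have hoeffding := (hasSubgaussianMGF_of_mem_Icc (X := fun i : A => v i) (μ := P)
    Measurable.of_discrete.aemeasurable (ae_of_all _ fun i => hv i i.2)).mgf_le t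
  rw [mgf, integral_eq v, integral_eq fun i => exp (t * (v i - avg)),
    div_le_iff₀ (by exact_mod_cast hA.card_pos)] at hoeffding
  calc ∑ i ∈ A, exp (t * v i) = exp (t * avg) * ∑ i ∈ A, exp (t * (v i - avg)) := by
        rw [Finset.mul_sum]; congr! 1 with i; rw [← exp_add]; ring_nf
    _ ≤ exp (t * avg) * (exp (((‖b - a‖₊ / 2) ^ 2 : NNReal) * t ^ 2 / 2) * #A) := by gcongr
    _ = _ := by
      rw [mul_comm (#A : ℝ), ← mul_assoc, ← exp_add]
      congr 2
      push_cast [coe_nnnorm, Real.norm_eq_abs, div_pow, sq_abs]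
      ring

end FiniteAverage

namespace SamplingWithoutReplacement

variable {N : ℕ} (y : Fin N → ℝ)

def prefixSum (σ : Perm (Fin N)) (k : ℕ) : ℝ :=
  ∑ t : Fin N, if (t : ℕ) < k then y (σ t) else 0

def DependsOnPrefix {β : Type*} (k : ℕ) (f : Perm (Fin N) → β) : Prop :=
  ∀ σ τ : Perm (Fin N), (∀ t : Fin N, (t : ℕ) < k → σ t = τ t) → f σ = f τ

theorem prefixSum_congr {k : ℕ} {σ τ : Perm (Fin N)}
    (h : ∀ t : Fin N, (t : ℕ) < k → σ t = τ t) : prefixSum y σ k = prefixSum y τ k := by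
  refine Finset.sum_congr rfl fun t _ => ?_
  split_ifs with ht
  · rw [h t ht]
  · rfl

theorem prefixSum_zero (σ : Perm (Fin N)) : prefixSum y σ 0 = 0 := by
  simp [prefixSum]

theorem prefixSum_succ (σ : Perm (Fin N)) (i : Fin N) :
    prefixSum y σ (i + 1) = prefixSum y σ i + y (σ i) := by
  have hi : y (σ i) = ∑ t, if t = i then y (σ t) else 0 := by simp
  rw [prefixSum, prefixSum, hi, ← Finset.sum_add_distrib]
  refine Finset.sum_congr rfl fun t _ => ?_
  split_ifs <;> simp_all [Fin.ext_iff] <;> omega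

theorem prefixSum_add_sum_Ici (σ : Perm (Fin N)) (i : Fin N) :
    prefixSum y σ i + ∑ j ∈ Ici i, y (σ j) = ∑ j, y j := by
  have hIci : univ.filter (fun t : Fin N => ¬ (t : ℕ) < i) = Ici i := by
    refine Finset.ext fun t => ?_
    simp only [mem_filter, mem_univ, true_and, not_lt, mem_Ici, Fin.le_iff_val_le_val]
  rw [prefixSum, ← Finset.sum_filter, ← hIci, Finset.sum_filter_add_sum_filter_not,
    Equiv.sum_comp σ y]

noncomputable def normalizedPrefixSum (σ : Perm (Fin N)) (k : ℕ) : ℝ :=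
  prefixSum y σ k / ((N : ℝ) - k)

theorem sub_mul_sum_mul_normalizedPrefixSum_succ (i : Fin N) {w : Perm (Fin N) → ℝ}
    (hw : DependsOnPrefix i w) (f : ℝ → ℝ) :
    ((N : ℝ) - i) * ∑ σ, w σ * f (normalizedPrefixSum y σ (i + 1))
      = ∑ σ, w σ * ∑ j ∈ Ici i,
          f ((prefixSum y σ i + y (σ j)) / ((N : ℝ) - i - 1)) := by
  have swap_eq {j : Fin N} (hj : j ∈ Ici i) (σ : Perm (Fin N)) (t : Fin N) (ht : (t : ℕ) < i) :
      (σ * swap i j) t = σ t := by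
    have hij : i ≤ j := mem_Ici.mp hj
    rw [Fin.le_iff_val_le_val] at hij
    rw [Perm.mul_apply,
      swap_apply_of_ne_of_ne (Fin.ne_of_val_ne ht.ne) (Fin.ne_of_val_ne (by omega))]
  have hcard : ((N : ℝ) - i) = #(Ici i) := by
    rw [Fin.card_Ici, Nat.cast_sub i.is_lt.le]
  set g := fun σ => w σ * f (normalizedPrefixSum y σ (i + 1))
  calc ((N : ℝ) - i) * ∑ σ, g σ = ∑ j ∈ Ici i, ∑ σ, g (σ * swap i j) := by
        rw [hcard, ← nsmul_eq_mul, ← Finset.sum_const]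
        exact Finset.sum_congr rfl fun j _ =>
          (Equiv.sum_comp (Equiv.mulRight (swap i j)) _).symm
    _ = _ := by
        rw [Finset.sum_comm]
        refine Finset.sum_congr rfl fun σ _ => ?_
        rw [Finset.mul_sum]
        refine Finset.sum_congr rfl fun j hj => ?_
        simp only [g, normalizedPrefixSum]
        rw [hw _ σ (swap_eq hj σ), prefixSum_succ, prefixSum_congr y (swap_eq hj σ),
          Perm.mul_apply, swap_apply_left, Nat.cast_add_one, sub_add_eq_sub_sub]

theorem average_normalizedPrefixSum_succ (hy : ∑ i, y i = 0) (σ : Perm (Fin N)) (i : Fin N)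
    (hi : (i : ℕ) + 1 < N) :
    (∑ j ∈ Ici i, (prefixSum y σ i + y (σ j)) / ((N : ℝ) - i - 1)) / #(Ici i)
      = normalizedPrefixSum y σ i := by
  have hcard : (#(Ici i) : ℝ) = (N : ℝ) - i := by
    rw [Fin.card_Ici, Nat.cast_sub i.is_lt.le]
  have hrest : ∑ j ∈ Ici i, y (σ j) = -prefixSum y σ i := by
    linarith [prefixSum_add_sum_Ici y σ i]
  have hN : (0 : ℝ) < (N : ℝ) - i - 1 := by
    rw [sub_sub, sub_pos]; exact_mod_cast hi
  rw [← Finset.sum_div, Finset.sum_add_distrib, hrest, Finset.sum_const, nsmul_eq_mul, hcard,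
    normalizedPrefixSum]
  field_simp
  ring

theorem sum_mul_exp_normalizedPrefixSum_le_succ (hy : ∑ i, y i = 0) {k : ℕ} (hk : k + 1 < N)
    {w : Perm (Fin N) → ℝ} (hw0 : ∀ σ, 0 ≤ w σ) (hw : DependsOnPrefix k w) (s : ℝ) :
    ∑ σ, w σ * exp (s * normalizedPrefixSum y σ k)
      ≤ ∑ σ, w σ * exp (s * normalizedPrefixSum y σ (k + 1)) := by
  obtain ⟨i, rfl⟩ : ∃ i : Fin N, (i : ℕ) = k := ⟨⟨k, by omega⟩, rfl⟩
  have hNk : (0 : ℝ) < (N : ℝ) - i := by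
    rw [sub_pos]; exact_mod_cast i.is_lt
  have averaging := sub_mul_sum_mul_normalizedPrefixSum_succ y i hw (fun u => exp (s * u))
  rw [← mul_le_mul_iff_right₀ hNk, averaging, Finset.mul_sum]
  refine Finset.sum_le_sum fun σ _ => ?_
  have jensen := card_mul_exp_mul_average_le_sum_exp (Ici i)
    (fun j => (prefixSum y σ i + y (σ j)) / ((N : ℝ) - i - 1)) s
  rw [average_normalizedPrefixSum_succ y hy σ i hk, Fin.card_Ici,
    Nat.cast_sub i.is_lt.le] at jensen
  rw [mul_left_comm]
  exact mul_le_mul_of_nonneg_left jensen (hw0 σ)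

theorem sum_exp_normalizedPrefixSum_succ_le (hy : ∑ i, y i = 0) {a b : ℝ}
    (hyab : ∀ i, y i ∈ Set.Icc a b) {k : ℕ} (hk : k + 1 < N) (s : ℝ) :
    ∑ σ, exp (s * normalizedPrefixSum y σ (k + 1))
      ≤ exp (s ^ 2 * (b - a) ^ 2 / 8 / ((N : ℝ) - k - 1) ^ 2)
          * ∑ σ, exp (s * normalizedPrefixSum y σ k) := by
  obtain ⟨i, rfl⟩ : ∃ i : Fin N, (i : ℕ) = k := ⟨⟨k, by omega⟩, rfl⟩
  have hNk : (0 : ℝ) < (N : ℝ) - i := by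
    rw [sub_pos]; exact_mod_cast i.is_lt
  have hD : (0 : ℝ) < (N : ℝ) - i - 1 := by
    rw [sub_sub, sub_pos]; exact_mod_cast hk
  have averaging := sub_mul_sum_mul_normalizedPrefixSum_succ y i (w := fun _ => 1)
    (fun _ _ _ => rfl) (fun u => exp (s * u))
  simp only [one_mul] at averaging
  rw [← mul_le_mul_iff_right₀ hNk, averaging, Finset.mul_sum, Finset.mul_sum]
  refine Finset.sum_le_sum fun σ _ => ?_
  have hoeffding := sum_exp_mul_le_card_mul_exp (Ici i)
    (fun j => (prefixSum y σ i + y (σ j)) / ((N : ℝ) - i - 1))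
    (a := (prefixSum y σ i + a) / ((N : ℝ) - i - 1))
    (b := (prefixSum y σ i + b) / ((N : ℝ) - i - 1))
    (fun j _ => ⟨by gcongr; exact (hyab _).1, by gcongr; exact (hyab _).2⟩) s
  rw [average_normalizedPrefixSum_succ y hy σ i hk, Fin.card_Ici, Nat.cast_sub i.is_lt.le,
    exp_add] at hoeffding
  refine hoeffding.trans_eq ?_
  rw [mul_comm (exp _)]
  congr 3
  field_simp
  ring

theorem sum_exp_normalizedPrefixSum_le (hy : ∑ i, y i = 0) {a b : ℝ}
    (hyab : ∀ i, y i ∈ Set.Icc a b) {m : ℕ} (hm : m < N) (s : ℝ) :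
    ∑ σ, exp (s * normalizedPrefixSum y σ m)
      ≤ Fintype.card (Perm (Fin N))
          * exp (s ^ 2 * ((b - a) ^ 2 * ∑ k ∈ range m, 1 / ((N : ℝ) - k - 1) ^ 2) / 8) := by
  induction m with
  | zero => simp [normalizedPrefixSum, prefixSum_zero]
  | succ K ih =>
    calc ∑ σ, exp (s * normalizedPrefixSum y σ (K + 1))
        ≤ exp (s ^ 2 * (b - a) ^ 2 / 8 / ((N : ℝ) - K - 1) ^ 2)
          * ∑ σ, exp (s * normalizedPrefixSum y σ K) :=
          sum_exp_normalizedPrefixSum_succ_le y hy hyab hm s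
      _ ≤ exp (s ^ 2 * (b - a) ^ 2 / 8 / ((N : ℝ) - K - 1) ^ 2)
          * (Fintype.card (Perm (Fin N))
            * exp (s ^ 2 * ((b - a) ^ 2 * ∑ k ∈ range K, 1 / ((N : ℝ) - k - 1) ^ 2)
              / 8)) := by
          gcongr
          exact ih (by omega)
      _ = _ := by
          rw [sum_range_succ, mul_add, mul_add, add_div, exp_add]
          ring_nf

def ReachesLevel (c : ℝ) (m : ℕ) (σ : Perm (Fin N)) : Prop :=
  ∃ k ∈ Icc 1 m, c ≤ normalizedPrefixSum y σ k

theorem dependsOnPrefix_reachesLevel (c : ℝ) (m : ℕ) :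
    DependsOnPrefix m (ReachesLevel y c m) := by
  intro σ τ h
  unfold ReachesLevel
  refine propext (exists_congr fun k => and_congr_right fun hk => ?_)
  rw [normalizedPrefixSum, normalizedPrefixSum,
    prefixSum_congr y fun t ht => h t (ht.trans_le (mem_Icc.mp hk).2)]

theorem reachesLevel_succ (c : ℝ) (m : ℕ) (σ : Perm (Fin N)) :
    ReachesLevel y c (m + 1) σ
      ↔ ReachesLevel y c m σ ∨ c ≤ normalizedPrefixSum y σ (m + 1) := by
  rw [ReachesLevel, ← insert_Icc_right_eq_Icc_add_one (by omega), exists_mem_insert, or_comm,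
    ReachesLevel]

theorem sum_ite_exp_le_sum_ite_exp_normalizedPrefixSum (hy : ∑ i, y i = 0) {c s : ℝ}
    (hs : 0 ≤ s) {m : ℕ} (hm : m < N) :
    ∑ σ, (if ReachesLevel y c m σ then exp (s * c) else 0)
      ≤ ∑ σ, (if ReachesLevel y c m σ then exp (s * normalizedPrefixSum y σ m) else 0) := by
  induction m with
  | zero => simp [ReachesLevel]
  | succ K ih =>
    have split (σ : Perm (Fin N)) (v : ℝ) :
        (if ReachesLevel y c (K + 1) σ then v else 0)
          = (if ReachesLevel y c K σ then v else 0)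
            + (if ¬ ReachesLevel y c K σ ∧ c ≤ normalizedPrefixSum y σ (K + 1) then v
                else 0) := by
      by_cases h : ReachesLevel y c K σ <;> simp [reachesLevel_succ, h]
    have submartingale := sum_mul_exp_normalizedPrefixSum_le_succ y hy hm
      (w := fun σ => if ReachesLevel y c K σ then 1 else 0) (fun σ => by positivity)
      (fun σ τ h => by simp only [dependsOnPrefix_reachesLevel y c K σ τ h]) s
    simp only [boole_mul] at submartingale
    simp only [split, Finset.sum_add_distrib]
    gcongr ?_ + ?_
    · exact (ih (by omega)).trans submartingale
    · refine Finset.sum_le_sum fun σ _ => ?_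
      split_ifs with h
      · exact exp_le_exp.mpr (mul_le_mul_of_nonneg_left h.2 hs)
      · rfl

theorem card_reachesLevel_mul_exp_le (hy : ∑ i, y i = 0) {c s : ℝ} (hs : 0 ≤ s) {m : ℕ}
    (hm : m < N) :
    #{σ | ReachesLevel y c m σ} * exp (s * c) ≤ ∑ σ, exp (s * normalizedPrefixSum y σ m) :=
  calc #{σ | ReachesLevel y c m σ} * exp (s * c)
      = ∑ σ, (if ReachesLevel y c m σ then exp (s * c) else 0) := by
        rw [Finset.sum_ite, sum_const_zero, add_zero, sum_const, nsmul_eq_mul]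
    _ ≤ ∑ σ, (if ReachesLevel y c m σ then exp (s * normalizedPrefixSum y σ m) else 0) :=
        sum_ite_exp_le_sum_ite_exp_normalizedPrefixSum y hy hs hm
    _ ≤ ∑ σ, exp (s * normalizedPrefixSum y σ m) :=
        Finset.sum_le_sum fun σ _ => by split_ifs <;> first | rfl | positivity

theorem card_reachesLevel_div_card_le (hy : ∑ i, y i = 0) {a b : ℝ}
    (hyab : ∀ i, y i ∈ Set.Icc a b) {c s : ℝ} (hs : 0 ≤ s) {m : ℕ} (hm : m < N) :
    (#{σ | ReachesLevel y c m σ} : ℝ) / Fintype.card (Perm (Fin N))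
      ≤ exp (s ^ 2 * ((b - a) ^ 2 * ∑ k ∈ range m, 1 / ((N : ℝ) - k - 1) ^ 2) / 8
          - s * c) := by
  rw [div_le_iff₀ (by exact_mod_cast Fintype.card_pos), exp_sub, div_mul_eq_mul_div,
    le_div_iff₀ (exp_pos _), mul_comm _ (Fintype.card _ : ℝ)]
  exact (card_reachesLevel_mul_exp_le y hy hs hm).trans
    (sum_exp_normalizedPrefixSum_le y hy hyab hm s)

end SamplingWithoutReplacement

theorem sum_range_one_div_sq_le {N m : ℕ} (hm : m < N) :
    ∑ k ∈ range m, 1 / ((N : ℝ) - k - 1) ^ 2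
      ≤ m * (N - m + 1) / (N * ((N : ℝ) - m) ^ 2) := by
  have hNm : (1 : ℝ) ≤ N - m := by
    rw [le_sub_iff_add_le']; exact_mod_cast hm
  have hterm : ∀ k ∈ range m, 1 / ((N : ℝ) - k - 1) ^ 2
      ≤ (N - m + 1) / (N - m) * (1 / ((N : ℝ) - (k + 1 : ℕ)) - 1 / (N - k)) := by
    intro k hk
    have hd : (N : ℝ) - m ≤ N - k - 1 := by
      have : (k : ℝ) + 1 ≤ m := by exact_mod_cast mem_range.mp hk
      linarith
    have hd0 : (0 : ℝ) < N - k - 1 := by linarith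
    have hdiff : 1 / ((N : ℝ) - (k + 1 : ℕ)) - 1 / (N - k) = 1 / ((N - k - 1) * (N - k)) := by
      have : (N : ℝ) - k ≠ 0 := by linarith
      rw [Nat.cast_add_one, ← sub_sub]
      field_simp
      ring
    rw [hdiff, div_mul_div_comm, div_le_div_iff₀ (by positivity)
      (mul_pos (by linarith) (mul_pos hd0 (by linarith)))]
    nlinarith [mul_le_mul_of_nonneg_left hd (by linarith : (0 : ℝ) ≤ N - k - 1)]
  have htelescope := Finset.sum_range_sub (fun k => 1 / ((N : ℝ) - k)) m
  calc ∑ k ∈ range m, 1 / ((N : ℝ) - k - 1) ^ 2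
      ≤ ∑ k ∈ range m,
          (N - m + 1) / (N - m) * (1 / ((N : ℝ) - (k + 1 : ℕ)) - 1 / (N - k)) :=
        sum_le_sum hterm
    _ = (N - m + 1) / (N - m) * (1 / ((N : ℝ) - m) - 1 / N) := by
        rw [← mul_sum, htelescope, Nat.cast_zero, sub_zero]
    _ = _ := by
        have : (N : ℝ) ≠ 0 := Nat.cast_ne_zero.mpr (by omega)
        field_simp
        ring

theorem four_mul_div_sq_mul_div_eight_sub (c q : ℝ) :
    (4 * c / q) ^ 2 * q / 8 - 4 * c / q * c = -2 * c ^ 2 / q := by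
  rcases eq_or_ne q 0 with rfl | hq
  · simp
  · field_simp
    ring

theorem neg_two_mul_sq_div_le {N m : ℕ} (hm : 0 < m) (hmN : m < N) (ε q V : ℝ) (hq : 0 ≤ q)
    (hV : 0 < V) (hVle : V ≤ m * (N - m + 1) / (N * ((N : ℝ) - m) ^ 2)) :
    -2 * (m * ε / (N - m)) ^ 2 / (q * V) ≤ -2 * m * ε ^ 2 / ((1 - (m - 1) / N) * q) := by
  have hNm : (0 : ℝ) < N - m := by rw [sub_pos]; exact_mod_cast hmN
  have hN : (0 : ℝ) < N := by exact_mod_cast hm.trans hmN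
  have key : 2 * m * ε ^ 2 / (1 - (m - 1) / N) ≤ 2 * (m * ε / (N - m)) ^ 2 / V :=
    calc 2 * m * ε ^ 2 / (1 - (m - 1) / N)
        = 2 * (m * ε / (N - m)) ^ 2 / (m * (N - m + 1) / (N * ((N : ℝ) - m) ^ 2)) := by
          have : (N : ℝ) - m + 1 ≠ 0 := by linarith
          rw [one_sub_div hN.ne', sub_sub_eq_add_sub, add_sub_right_comm]
          field_simp
      _ ≤ 2 * (m * ε / (N - m)) ^ 2 / V := div_le_div_of_nonneg_left (by positivity) hV hVle
  calc -2 * (m * ε / (N - m)) ^ 2 / (q * V) = -(2 * (m * ε / (N - m)) ^ 2 / V / q) := by ring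
    _ ≤ -(2 * m * ε ^ 2 / (1 - (m - 1) / N) / q) :=
        neg_le_neg (div_le_div_of_nonneg_right key hq)
    _ = _ := by rw [div_div]; ring

/-- Hoeffding–Serfling maximal inequality: for a uniformly random
without-replacement ordering `X₁, …, X_N` of `N` reals in `[a,b]` with mean
`μ`, and any `1 ≤ m ≤ N-1` and `ε > 0`,
`P(max_{1≤k≤m} (Σ_{t≤k} (X_t - μ))/(N-k) ≥ mε/(N-m))
  ≤ exp(-2mε² / ((1-(m-1)/N)(b-a)²))`. -/
theorem hoeffding_serfling_maximal_inequality
    (N m : ℕ) (hm : 1 ≤ m) (hmN : m ≤ N - 1) (a b : ℝ)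
    (x : Fin N → ℝ) (hx : ∀ i, x i ∈ Set.Icc a b)
    (μ : ℝ) (hμ : μ = (∑ i, x i) / N)
    (ε : ℝ) (hε : 0 < ε) :
    ((Finset.univ.filter (fun σ : Equiv.Perm (Fin N) =>
          ∃ k ∈ Finset.Icc 1 m,
            (m : ℝ) * ε / ((N : ℝ) - m)
              ≤ (∑ t : Fin N, if (t : ℕ) < k then x (σ t) - μ else 0)
                  / ((N : ℝ) - k))).card : ℝ)
        / (Fintype.card (Equiv.Perm (Fin N)) : ℝ)
      ≤ Real.exp (-2 * m * ε ^ 2 / ((1 - ((m : ℝ) - 1) / N) * (b - a) ^ 2)) := by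
  have hmN' : m < N := by omega
  have hNm : (0 : ℝ) < N - m := by rw [sub_pos]; exact_mod_cast hmN'
  have hy : ∑ i, (x i - μ) = 0 := by
    rw [sum_sub_distrib, sum_const, card_univ, Fintype.card_fin, nsmul_eq_mul, hμ,
      mul_div_cancel₀ _ (Nat.cast_ne_zero.mpr (by omega)), sub_self]
  have hyab (i : Fin N) : x i - μ ∈ Set.Icc (a - μ) (b - μ) :=
    ⟨sub_le_sub_right (hx i).1 μ, sub_le_sub_right (hx i).2 μ⟩
  set V := ∑ k ∈ range m, 1 / ((N : ℝ) - k - 1) ^ 2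
  have hV : 0 < V := sum_pos (fun k hk => one_div_pos.mpr (pow_pos (by
      have : (k : ℝ) + 1 ≤ m := by exact_mod_cast mem_range.mp hk
      linarith) 2)) (nonempty_range_iff.mpr (by omega))
  set c := (m : ℝ) * ε / ((N : ℝ) - m)
  -- this `s` minimises `s ↦ s² (b - a)² V / 8 - s c`
  have tail := SamplingWithoutReplacement.card_reachesLevel_div_card_le (fun i => x i - μ) hy
    hyab (c := c) (s := 4 * c / ((b - a) ^ 2 * V)) (div_nonneg (by positivity) (by positivity))
    hmN'
  rw [sub_sub_sub_cancel_right, four_mul_div_sq_mul_div_eight_sub] at tail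
  exact tail.trans (exp_le_exp.mpr
    (neg_two_mul_sq_div_le hm hmN' ε _ V (sq_nonneg _) hV (sum_range_one_div_sq_le hmN')))
end
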